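/- arXiv:2408.13493 — 7 statements merged into one kernel-verified Lean document; each statement's English description precedes it below -/
import Mathlib

section
/- For vectors a, g in R^n with a ≠ 0 and g ≠ 0, the projection of g onto the hypercone C_a^Δ = {x : x = 0 or ⟨a,x⟩ ≥ ‖a‖‖x‖ cos(π/2 − Δ)} lies in the two-dimensional subspace spanned by a and g; that is, the minimizer of ‖x − g‖ over x ∈ C_a^Δ can be written as a linear combination of a and g. -/
/-!
Let `K` be the plane spanned by `a` and `g`, and `P` the orthogonal projection onto `K`.
`P` maps the cone into itself: it fixes `⟪a, x⟫` because `a ∈ K`, and does not increase `‖x‖`,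
while the cone condition only asks `‖x‖` to be small against `⟪a, x⟫` (as `cos (π/2 - Δ) ≥ 0`).
Since `g ∈ K`, Pythagoras gives `‖x - g‖² = ‖P x - g‖² + ‖x - P x‖²`, so a nearest point `p`
of the cone to `g` must satisfy `p = P p`, i.e. `p ∈ K`.
-/

open Real RealInnerProductSpace

variable {E : Type*} [NormedAddCommGroup E] [InnerProductSpace ℝ E]

def hypercone (a : E) (c : ℝ) : Set E :=
  {x | x = 0 ∨ ⟪a, x⟫ ≥ ‖a‖ * ‖x‖ * c}

namespace Submodule

variable (K : Submodule ℝ E) [K.HasOrthogonalProjection]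

theorem norm_sub_sq_eq_norm_starProjection_sub_sq_add {g : E} (hg : g ∈ K) (x : E) :
    ‖x - g‖ ^ 2 = ‖K.starProjection x - g‖ ^ 2 + ‖x - K.starProjection x‖ ^ 2 := by
  have hperp : ⟪K.starProjection x - g, x - K.starProjection x⟫ = 0 := by
    rw [real_inner_comm]
    exact K.starProjection_inner_eq_zero x _ (K.sub_mem (K.starProjection_apply_mem x) hg)
  have := norm_add_sq_eq_norm_sq_add_norm_sq_real hperp
  rw [sub_add_sub_cancel'] at this
  simpa only [sq] using this

theorem mem_of_forall_norm_sub_le_of_starProjection_mem {C : Set E} {g p : E}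
    (hCK : ∀ x ∈ C, K.starProjection x ∈ C) (hg : g ∈ K) (hpC : p ∈ C)
    (hmin : ∀ x ∈ C, ‖p - g‖ ≤ ‖x - g‖) : p ∈ K := by
  have hpyth := K.norm_sub_sq_eq_norm_starProjection_sub_sq_add hg p
  have hle : ‖p - g‖ ^ 2 ≤ ‖K.starProjection p - g‖ ^ 2 :=
    pow_le_pow_left₀ (norm_nonneg _) (hmin _ (hCK p hpC)) 2
  have hfix : ‖p - K.starProjection p‖ ^ 2 ≤ 0 := by linarith
  rw [← K.starProjection_eq_self_iff, eq_comm, ← sub_eq_zero, ← norm_eq_zero]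
  exact sq_nonpos_iff _ |>.mp hfix

theorem starProjection_mem_hypercone {a : E} (ha : a ∈ K) {c : ℝ} (hc : 0 ≤ c) {x : E}
    (hx : x ∈ hypercone a c) : K.starProjection x ∈ hypercone a c := by
  rcases hx with rfl | hx
  · exact Or.inl (map_zero _)
  · refine Or.inr ?_
    have hinner : ⟪a, K.starProjection x⟫ = ⟪a, x⟫ := by
      rw [← K.inner_starProjection_left_eq_right, K.starProjection_eq_self_iff.mpr ha]
    have hnorm : ‖a‖ * ‖K.starProjection x‖ * c ≤ ‖a‖ * ‖x‖ * c := by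
      gcongr
      exact K.norm_starProjection_apply_le x
    rw [ge_iff_le, hinner]
    exact hnorm.trans hx

end Submodule

theorem cone_projection_planar_general {n : ℕ} (a g p : EuclideanSpace ℝ (Fin n)) (Δ : ℝ)
    (hΔ0 : 0 ≤ Δ) (hΔ1 : Δ ≤ π / 2)
    (C : Set (EuclideanSpace ℝ (Fin n)))
    (hC : C = {x | x = 0 ∨ ⟪a, x⟫ ≥ ‖a‖ * ‖x‖ * Real.cos (π / 2 - Δ)})
    (hpC : p ∈ C) (hmin : ∀ x ∈ C, ‖p - g‖ ≤ ‖x - g‖) :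
    ∃ c d : ℝ, p = c • a + d • g := by
  have hcos : 0 ≤ Real.cos (π / 2 - Δ) := by
    rw [cos_pi_div_two_sub]
    exact sin_nonneg_of_nonneg_of_le_pi hΔ0 (by linarith [pi_pos])
  let K := Submodule.span ℝ ({a, g} : Set (EuclideanSpace ℝ (Fin n)))
  have haK : a ∈ K := Submodule.subset_span (by simp)
  have hgK : g ∈ K := Submodule.subset_span (by simp)
  have hpK : p ∈ K := K.mem_of_forall_norm_sub_le_of_starProjection_mem
    (fun x hx => by subst hC; exact K.starProjection_mem_hypercone haK hcos hx) hgK hpC hmin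
  obtain ⟨c, d, hcd⟩ := Submodule.mem_span_pair.mp hpK
  exact ⟨c, d, hcd.symm⟩

/-- The projection of `g` onto the hypercone
`C_a^Δ = {x : x = 0 ∨ ⟪a,x⟫ ≥ ‖a‖‖x‖ cos(π/2 − Δ)}` lies in the plane spanned by `a` and `g`. -/
theorem cone_projection_planar {n : ℕ} (a g p : EuclideanSpace ℝ (Fin n)) (Δ : ℝ)
    (ha : a ≠ 0) (hg : g ≠ 0) (hΔ0 : 0 ≤ Δ) (hΔ1 : Δ ≤ π / 2)
    (C : Set (EuclideanSpace ℝ (Fin n)))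
    (hC : C = {x | x = 0 ∨ ⟪a, x⟫ ≥ ‖a‖ * ‖x‖ * Real.cos (π / 2 - Δ)})
    (hpC : p ∈ C) (hmin : ∀ x ∈ C, ‖p - g‖ ≤ ‖x - g‖) :
    ∃ c d : ℝ, p = c • a + d • g :=
  cone_projection_planar_general a g p Δ hΔ0 hΔ1 C hC hpC hmin
end

section
/- With g^p as the hypercone projection formula, the inner product of a with g^p satisfies ⟨a, g^p⟩ = sin Δ sin(Δ + φ) ‖a‖‖g‖, where φ is the angle between a and g. -/
open Real RealInnerProductSpace InnerProductGeometry

/-- Inner product of the cone axis with the hypercone projection: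
`⟪a, g^p⟫ = sin Δ sin(Δ + φ) ‖a‖‖g‖`. -/
theorem cone_projection_inner_axis {n : ℕ} {a g : EuclideanSpace ℝ (Fin n)} (Δ φ : ℝ)
    (ha : a ≠ 0) (hg : g ≠ 0) (hΔ0 : 0 ≤ Δ) (hΔ1 : Δ < π / 2)
    (hφ : φ = angle a g) (hφ1 : 0 < φ) (hφ2 : φ < π) :
    ⟪a, ((Real.cos Δ / Real.sin φ) * Real.sin (Δ + φ)) •
      (g + ((‖g‖ / ‖a‖) * (Real.sin φ * Real.tan Δ - Real.cos φ)) • a)⟫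
      = Real.sin Δ * Real.sin (Δ + φ) * ‖a‖ * ‖g‖ := by
  have hag : ⟪a, g⟫ = Real.cos φ * (‖a‖ * ‖g‖) := by
    rw [hφ, cos_angle, div_mul_cancel₀]
    exact mul_ne_zero (norm_ne_zero_iff.mpr ha) (norm_ne_zero_iff.mpr hg)
  have haa : ⟪a, a⟫ = (‖a‖ : ℝ) ^ 2 := real_inner_self_eq_norm_sq a
  have hna : (‖a‖ : ℝ) ≠ 0 := norm_ne_zero_iff.mpr ha
  have hsφ : Real.sin φ ≠ 0 := ne_of_gt (Real.sin_pos_of_pos_of_lt_pi hφ1 hφ2)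
  have hcΔ : Real.cos Δ ≠ 0 := ne_of_gt (Real.cos_pos_of_mem_Ioo ⟨by linarith [Real.pi_pos], hΔ1⟩)
  rw [inner_smul_right, inner_add_right, inner_smul_right, hag, haa, Real.tan_eq_sin_div_cos]
  field_simp
  ring
end

section
/- With g^p as the hypercone projection formula, ⟨g, g^p⟩ = ‖g‖² sin²(Δ + φ), where φ is the angle between a and g. -/
open Real RealInnerProductSpace InnerProductGeometry

lemma Real.one_add_sub_mul_cos_eq_sin_mul_sin_add_div_cos {Δ φ : ℝ} (hΔ : cos Δ ≠ 0) :
    1 + (sin φ * tan Δ - cos φ) * cos φ = sin φ * sin (Δ + φ) / cos Δ := by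
  rw [tan_eq_sin_div_cos, sin_add]
  field_simp
  linear_combination -cos Δ * sin_sq_add_cos_sq φ

/-- For `a = 0` both sides vanish: `‖g‖ / 0 = 0` and `angle 0 g = π / 2`. -/
lemma InnerProductGeometry.norm_div_norm_mul_inner_eq_sq_mul_cos_angle
    {V : Type*} [NormedAddCommGroup V] [InnerProductSpace ℝ V] (a g : V) :
    ‖g‖ / ‖a‖ * ⟪g, a⟫ = ‖g‖ ^ 2 * cos (angle a g) := by
  rcases eq_or_ne g 0 with rfl | hg
  · simp
  have hnorm : ‖g‖ ^ 2 / (‖a‖ * ‖g‖) = ‖g‖ / ‖a‖ := by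
    rw [pow_two, mul_div_mul_right _ _ (norm_ne_zero_iff.mpr hg)]
  rw [cos_angle, real_inner_comm, ← hnorm]
  ring

theorem cone_projection_inner_self_general {n : ℕ} {a g : EuclideanSpace ℝ (Fin n)} (Δ φ : ℝ)
    (hΔ0 : 0 ≤ Δ) (hΔ1 : Δ < π / 2)
    (hφ : φ = angle a g) (hφ1 : 0 < φ) (hφ2 : φ < π) :
    ⟪g, ((Real.cos Δ / Real.sin φ) * Real.sin (Δ + φ)) •
      (g + ((‖g‖ / ‖a‖) * (Real.sin φ * Real.tan Δ - Real.cos φ)) • a)⟫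
      = ‖g‖ ^ 2 * Real.sin (Δ + φ) ^ 2 := by
  have hcos : cos Δ ≠ 0 := (cos_pos_of_mem_Ioo ⟨by linarith [pi_pos], hΔ1⟩).ne'
  have hsin : sin φ ≠ 0 := (sin_pos_of_pos_of_lt_pi hφ1 hφ2).ne'
  have hga : ‖g‖ / ‖a‖ * ⟪g, a⟫ = ‖g‖ ^ 2 * cos φ :=
    hφ ▸ norm_div_norm_mul_inner_eq_sq_mul_cos_angle a g
  calc _ = cos Δ / sin φ * sin (Δ + φ) * ‖g‖ ^ 2 *
        (1 + (sin φ * tan Δ - cos φ) * cos φ) := by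
        rw [real_inner_smul_right, inner_add_right, real_inner_smul_right,
          real_inner_self_eq_norm_sq]
        linear_combination cos Δ / sin φ * sin (Δ + φ) * (sin φ * tan Δ - cos φ) * hga
    _ = ‖g‖ ^ 2 * sin (Δ + φ) ^ 2 := by
        rw [one_add_sub_mul_cos_eq_sin_mul_sin_add_div_cos hcos]
        field_simp

/-- Inner product of `g` with its hypercone projection: `⟪g, g^p⟫ = ‖g‖² sin²(Δ + φ)`. -/
theorem cone_projection_inner_self {n : ℕ} {a g : EuclideanSpace ℝ (Fin n)} (Δ φ : ℝ)
    (ha : a ≠ 0) (hg : g ≠ 0) (hΔ0 : 0 ≤ Δ) (hΔ1 : Δ < π / 2)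
    (hφ : φ = angle a g) (hφ1 : 0 < φ) (hφ2 : φ < π) :
    ⟪g, ((Real.cos Δ / Real.sin φ) * Real.sin (Δ + φ)) •
      (g + ((‖g‖ / ‖a‖) * (Real.sin φ * Real.tan Δ - Real.cos φ)) • a)⟫
      = ‖g‖ ^ 2 * Real.sin (Δ + φ) ^ 2 :=
  cone_projection_inner_self_general Δ φ hΔ0 hΔ1 hφ hφ1 hφ2
end

section
/- Let f₁, f₂ be L-smooth and concave, x ∈ R^n with ∇f₁(x), ∇f₂(x) nonzero and ∇f₂(x) ∉ C_{∇f₁(x)}^Δ, and let u be the hypercone projection of ∇f₂(x) onto C_{∇f₁(x)}^Δ. Then for x⁺ = x + α u: f₁(x⁺) ≥ f₁(x) + α sin(Δ+φ)‖∇f₂(x)‖ (sin Δ ‖∇f₁(x)‖ − (Lα/2) sin(Δ+φ)‖∇f₂(x)‖), where φ is the angle between the gradients. In particular f₁(x⁺) ≥ f₁(x) whenever α ≤ 2 sin Δ ‖∇f₁(x)‖ / (L sin(Δ+φ)‖∇f₂(x)‖). -/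
open Real RealInnerProductSpace InnerProductGeometry

/-!
A function with `L`-Lipschitz gradient satisfies the quadratic lower bound
`f (x + v) ≥ f x + ⟪∇f x, v⟫ - L/2 ‖v‖²`: along the segment, the function
`t ↦ f (x + t v) - t ⟪∇f x, v⟫ + L/2 t² ‖v‖²` has derivative
`⟪∇f (x + t v) - ∇f x, v⟫ + L t ‖v‖² ≥ 0` for `t ≥ 0`.
For the hypercone projection `u` of `∇f₂ x` a trigonometric computation gives
`⟪∇f₁ x, u⟫ = sin Δ sin (Δ + φ) ‖∇f₁ x‖ ‖∇f₂ x‖` and `‖u‖ = |sin (Δ + φ)| ‖∇f₂ x‖`;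
taking `v = α u` yields the bound, whose second factor is nonnegative for the stated step sizes.
-/

section Smooth

variable {E : Type*} [NormedAddCommGroup E] [InnerProductSpace ℝ E] [CompleteSpace E]
  {f : E → ℝ}

theorem hasDerivAt_comp_add_smul (hf : Differentiable ℝ f) (x v : E) (t : ℝ) :
    HasDerivAt (fun s : ℝ => f (x + s • v)) ⟪gradient f (x + t • v), v⟫ t := by
  have hline : HasDerivAt (fun s : ℝ => x + s • v) v t := by
    simpa using ((hasDerivAt_id t).smul_const v).const_add x
  rw [← (hf _).hasGradientAt.fderiv_apply]
  exact (hf _).hasFDerivAt.comp_hasDerivAt t hline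

theorem le_apply_add_of_lipschitz_gradient {L : ℝ} (hf : Differentiable ℝ f)
    (hL : ∀ y z : E, ‖gradient f y - gradient f z‖ ≤ L * ‖y - z‖) (x v : E) :
    f x + ⟪gradient f x, v⟫ - L / 2 * ‖v‖ ^ 2 ≤ f (x + v) := by
  set h : ℝ → ℝ := fun t => f (x + t • v) - t * ⟪gradient f x, v⟫ + L / 2 * t ^ 2 * ‖v‖ ^ 2
  have hderiv : ∀ t, HasDerivAt h
      (⟪gradient f (x + t • v) - gradient f x, v⟫ + L * t * ‖v‖ ^ 2) t := by
    intro t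
    refine (((hasDerivAt_comp_add_smul hf x v t).sub ((hasDerivAt_id t).mul_const _)).add
      (((hasDerivAt_pow 2 t).const_mul (L / 2)).mul_const (‖v‖ ^ 2))).congr_deriv ?_
    rw [inner_sub_left]
    ring
  have hmono : MonotoneOn h (Set.Ici 0) := by
    refine monotoneOn_of_hasDerivWithinAt_nonneg (convex_Ici 0)
      (fun t _ => (hderiv t).continuousAt.continuousWithinAt)
      (fun t _ => (hderiv t).hasDerivWithinAt) fun t ht => ?_
    rw [interior_Ici, Set.mem_Ioi] at ht
    have hlip : ‖gradient f (x + t • v) - gradient f x‖ * ‖v‖ ≤ L * t * ‖v‖ ^ 2 := by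
      have := hL (x + t • v) x
      rw [add_sub_cancel_left, norm_smul, norm_of_nonneg ht.le] at this
      nlinarith [norm_nonneg v]
    linarith [neg_le_of_abs_le (abs_real_inner_le_norm (gradient f (x + t • v) - gradient f x) v)]
  have := hmono (Set.mem_Ici.mpr le_rfl) (Set.mem_Ici.mpr zero_le_one) zero_le_one
  simp only [h, zero_smul, add_zero, one_smul, zero_mul, sub_zero, one_mul, ne_eq,
    OfNat.ofNat_ne_zero, not_false_eq_true, zero_pow, mul_zero, one_pow] at this
  linarith

end Smooth

section Hypercone

variable {E : Type*} [NormedAddCommGroup E] [InnerProductSpace ℝ E]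

noncomputable def hyperconeProj (Δ : ℝ) (a b : E) : E :=
  ((cos Δ / sin (angle a b)) * sin (Δ + angle a b)) •
    (b + ((‖b‖ / ‖a‖) * (sin (angle a b) * tan Δ - cos (angle a b))) • a)

variable {Δ : ℝ} {a b : E}

theorem inner_hyperconeProj (hΔ : cos Δ ≠ 0) (hab : sin (angle a b) ≠ 0) :
    ⟪a, hyperconeProj Δ a b⟫ = sin Δ * sin (Δ + angle a b) * (‖a‖ * ‖b‖) := by
  rw [hyperconeProj, real_inner_smul_right, inner_add_right, real_inner_smul_right,
    real_inner_self_eq_norm_sq, ← cos_angle_mul_norm_mul_norm, tan_eq_sin_div_cos]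
  rcases eq_or_ne a 0 with rfl | ha
  · simp
  have := norm_ne_zero_iff.mpr ha
  field_simp
  ring

theorem norm_hyperconeProj_sq (ha : a ≠ 0) (hΔ : cos Δ ≠ 0) (hab : sin (angle a b) ≠ 0) :
    ‖hyperconeProj Δ a b‖ ^ 2 = sin (Δ + angle a b) ^ 2 * ‖b‖ ^ 2 := by
  have := norm_ne_zero_iff.mpr ha
  rw [hyperconeProj, norm_smul, mul_pow, norm_add_sq_real, real_inner_smul_right,
    real_inner_comm, ← cos_angle_mul_norm_mul_norm, norm_smul, tan_eq_sin_div_cos]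
  simp only [Real.norm_eq_abs, mul_pow, sq_abs, div_pow]
  field_simp
  linear_combination (-(sin (Δ + angle a b) ^ 2 * cos Δ ^ 2 * ‖b‖ ^ 2)) *
      sin_sq_add_cos_sq (angle a b) +
    (sin (Δ + angle a b) ^ 2 * sin (angle a b) ^ 2 * ‖b‖ ^ 2) * sin_sq_add_cos_sq Δ

end Hypercone

theorem mul_mul_sub_nonneg_of_le_div {L a b α : ℝ} (hL : 0 < L) (hb : 0 ≤ b) (hα : 0 ≤ α)
    (h : α ≤ 2 * b / (L * a)) : 0 ≤ α * a * (b - L * α / 2 * a) := by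
  rcases lt_trichotomy a 0 with ha | rfl | ha
  · have : 2 * b / (L * a) ≤ 0 := div_nonpos_of_nonneg_of_nonpos (by linarith) (by nlinarith)
    simp [le_antisymm (h.trans this) hα]
  · simp
  · have hLa : 0 < L * a := mul_pos hL ha
    have : α * (L * a) ≤ 2 * b := (le_div_iff₀ hLa).mp h
    exact mul_nonneg (mul_nonneg hα ha.le) (by nlinarith)

theorem cone_step_preserves_f1_general {n : ℕ} (f₁ f₂ : EuclideanSpace ℝ (Fin n) → ℝ)
    (L Δ φ α : ℝ) (x u : EuclideanSpace ℝ (Fin n))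
    (hdiff₁ : Differentiable ℝ f₁)
    (hL₁ : ∀ y z : EuclideanSpace ℝ (Fin n), ‖gradient f₁ y - gradient f₁ z‖ ≤ L * ‖y - z‖)
    (hLpos : 0 < L)
    (hg₁ : gradient f₁ x ≠ 0)
    (hΔ0 : 0 < Δ) (hΔ1 : Δ < π / 2)
    (hφ : φ = angle (gradient f₁ x) (gradient f₂ x))
    (hφ1 : π / 2 - Δ < φ) (hφ2 : φ < π)
    (hu : u = ((Real.cos Δ / Real.sin φ) * Real.sin (Δ + φ)) •
      (gradient f₂ x + ((‖gradient f₂ x‖ / ‖gradient f₁ x‖) *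
        (Real.sin φ * Real.tan Δ - Real.cos φ)) • gradient f₁ x))
    (hα : 0 ≤ α) :
    f₁ (x + α • u) ≥ f₁ x + α * Real.sin (Δ + φ) * ‖gradient f₂ x‖ *
      (Real.sin Δ * ‖gradient f₁ x‖ - L * α / 2 * Real.sin (Δ + φ) * ‖gradient f₂ x‖) ∧
    (α ≤ 2 * Real.sin Δ * ‖gradient f₁ x‖ / (L * Real.sin (Δ + φ) * ‖gradient f₂ x‖) →
      f₁ (x + α • u) ≥ f₁ x) := by
  subst hφ
  replace hu : u = hyperconeProj Δ (gradient f₁ x) (gradient f₂ x) := hu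
  have hcos : cos Δ ≠ 0 := (cos_pos_of_mem_Ioo ⟨by linarith, hΔ1⟩).ne'
  have hsin : sin (angle (gradient f₁ x) (gradient f₂ x)) ≠ 0 :=
    (sin_pos_of_pos_of_lt_pi (by linarith) hφ2).ne'
  have hsinΔ : 0 ≤ sin Δ := sin_nonneg_of_nonneg_of_le_pi hΔ0.le (by linarith)
  have hbound := le_apply_add_of_lipschitz_gradient hdiff₁ hL₁ x (α • u)
  rw [real_inner_smul_right, norm_smul, mul_pow, norm_of_nonneg hα, hu,
    inner_hyperconeProj hcos hsin, norm_hyperconeProj_sq hg₁ hcos hsin, ← hu] at hbound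
  refine ⟨by linarith, fun hstep => ?_⟩
  have := mul_mul_sub_nonneg_of_le_div hLpos (mul_nonneg hsinΔ (norm_nonneg _)) hα
    (by simpa only [mul_assoc] using hstep)
  linarith

/-- Taking a step along the hypercone projection `u` of `∇f₂(x)` onto the cone of
`∇f₁(x)` does not decrease `f₁` for a small enough step size. -/
theorem cone_step_preserves_f1 {n : ℕ} (f₁ f₂ : EuclideanSpace ℝ (Fin n) → ℝ)
    (L Δ φ α : ℝ) (x u : EuclideanSpace ℝ (Fin n))
    (hdiff₁ : Differentiable ℝ f₁) (hdiff₂ : Differentiable ℝ f₂)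
    (hconc₁ : ConcaveOn ℝ Set.univ f₁) (hconc₂ : ConcaveOn ℝ Set.univ f₂)
    (hL₁ : ∀ y z : EuclideanSpace ℝ (Fin n), ‖gradient f₁ y - gradient f₁ z‖ ≤ L * ‖y - z‖)
    (hL₂ : ∀ y z : EuclideanSpace ℝ (Fin n), ‖gradient f₂ y - gradient f₂ z‖ ≤ L * ‖y - z‖)
    (hLpos : 0 < L)
    (hg₁ : gradient f₁ x ≠ 0) (hg₂ : gradient f₂ x ≠ 0)
    (hΔ0 : 0 < Δ) (hΔ1 : Δ < π / 2)
    (hφ : φ = angle (gradient f₁ x) (gradient f₂ x))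
    (hφ1 : π / 2 - Δ < φ) (hφ2 : φ < π)
    (hu : u = ((Real.cos Δ / Real.sin φ) * Real.sin (Δ + φ)) •
      (gradient f₂ x + ((‖gradient f₂ x‖ / ‖gradient f₁ x‖) *
        (Real.sin φ * Real.tan Δ - Real.cos φ)) • gradient f₁ x))
    (hα : 0 ≤ α) :
    f₁ (x + α • u) ≥ f₁ x + α * Real.sin (Δ + φ) * ‖gradient f₂ x‖ *
      (Real.sin Δ * ‖gradient f₁ x‖ - L * α / 2 * Real.sin (Δ + φ) * ‖gradient f₂ x‖) ∧
    (α ≤ 2 * Real.sin Δ * ‖gradient f₁ x‖ / (L * Real.sin (Δ + φ) * ‖gradient f₂ x‖) →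
      f₁ (x + α • u) ≥ f₁ x) :=
  cone_step_preserves_f1_general f₁ f₂ L Δ φ α x u hdiff₁ hL₁ hLpos hg₁ hΔ0 hΔ1 hφ hφ1 hφ2 hu hα
end

section
/- Let f_j be concave and L-smooth, u a direction with angle(∇f_j(x), u) ≤ π/2 − Δ and ‖u‖ ≤ G where G = ‖∇f_{i*}(x)‖. Then f_j(x + αu) ≥ f_j(x) + α‖u‖(sin Δ ‖∇f_j(x)‖ − (Lα/2) G); hence f_j(x + αu) ≥ f_j(x) whenever sin Δ ‖∇f_j(x)‖ ≥ (Lα/2) G. -/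
/-!
Along the ray `t ↦ x + t • v`, the gradient drifts from `∇f x` by at most `L t ‖v‖`, so
`f (x + t • v) - t ⟪∇f x, v⟫ + L/2 t² ‖v‖²` is nondecreasing on `[0, 1]`; this gives
the quadratic lower bound `f (x + v) ≥ f x + ⟪∇f x, v⟫ - L/2 ‖v‖²`. The angle condition turns the
linear term into at least `sin Δ ‖∇f x‖ ‖u‖`, and `‖u‖ ≤ G` bounds the quadratic term.
-/

open Real RealInnerProductSpace InnerProductGeometry Set

section Descent

variable {E : Type*} [NormedAddCommGroup E] [InnerProductSpace ℝ E] [CompleteSpace E]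

theorem le_image_add_of_norm_gradient_sub_le {f : E → ℝ} {L : ℝ} {x : E}
    (hf : Differentiable ℝ f) (hL : ∀ y, ‖gradient f y - gradient f x‖ ≤ L * ‖y - x‖) (v : E) :
    f x + ⟪gradient f x, v⟫ - L / 2 * ‖v‖ ^ 2 ≤ f (x + v) := by
  set φ : ℝ → ℝ := fun t => f (x + t • v) - t * ⟪gradient f x, v⟫ + L / 2 * t ^ 2 * ‖v‖ ^ 2
  have hφ : ∀ t : ℝ, HasDerivAt φ
      (⟪gradient f (x + t • v) - gradient f x, v⟫ + L * t * ‖v‖ ^ 2) t := by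
    intro t
    have hray : HasDerivAt (fun s : ℝ => x + s • v) v t := by
      simpa using ((hasDerivAt_id t).smul_const v).const_add x
    have hfray := (hf (x + t • v)).hasGradientAt.hasFDerivAt.comp_hasDerivAt t hray
    refine HasDerivAt.congr_deriv (f := φ)
      ((hfray.sub ((hasDerivAt_id t).mul_const ⟪gradient f x, v⟫)).add
        (((hasDerivAt_pow 2 t).const_mul (L / 2)).mul_const (‖v‖ ^ 2))) ?_
    rw [InnerProductSpace.toDual_apply_apply, inner_sub_left]
    ring
  have hderiv_nonneg : ∀ t ∈ interior (Icc (0 : ℝ) 1),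
      0 ≤ ⟪gradient f (x + t • v) - gradient f x, v⟫ + L * t * ‖v‖ ^ 2 := by
    intro t ht
    rw [interior_Icc] at ht
    have hdrift : ‖gradient f (x + t • v) - gradient f x‖ ≤ L * (t * ‖v‖) := by
      simpa [norm_smul, abs_of_pos ht.1] using hL (x + t • v)
    have hcs := neg_le_of_abs_le (abs_real_inner_le_norm (gradient f (x + t • v) - gradient f x) v)
    nlinarith [mul_le_mul_of_nonneg_right hdrift (norm_nonneg v)]
  have hmono : MonotoneOn φ (Icc 0 1) :=
    monotoneOn_of_hasDerivWithinAt_nonneg (convex_Icc 0 1)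
      (fun t _ => (hφ t).continuousAt.continuousWithinAt)
      (fun t _ => (hφ t).hasDerivWithinAt) hderiv_nonneg
  have := hmono (left_mem_Icc.2 zero_le_one) (right_mem_Icc.2 zero_le_one) zero_le_one
  norm_num only [φ, zero_smul, one_smul, add_zero] at this
  linarith

end Descent

theorem cos_mul_norm_mul_norm_le_inner_of_angle_le {V : Type*} [NormedAddCommGroup V]
    [InnerProductSpace ℝ V] {x y : V} {θ : ℝ} (hθ : θ ≤ π) (h : angle x y ≤ θ) :
    cos θ * (‖x‖ * ‖y‖) ≤ ⟪x, y⟫ := by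
  rw [← cos_angle_mul_norm_mul_norm]
  exact mul_le_mul_of_nonneg_right (cos_le_cos_of_nonneg_of_le_pi (angle_nonneg x y) hθ h)
    (by positivity)

theorem satisfied_objective_nondecrease_general {n : ℕ} (fj : EuclideanSpace ℝ (Fin n) → ℝ)
    (L Δ α G : ℝ) (x u : EuclideanSpace ℝ (Fin n))
    (hdiff : Differentiable ℝ fj)
    (hL : ∀ y z : EuclideanSpace ℝ (Fin n), ‖gradient fj y - gradient fj z‖ ≤ L * ‖y - z‖)
    (hLpos : 0 < L)
    (hΔ0 : 0 < Δ)
    (hangle : angle (gradient fj x) u ≤ π / 2 - Δ)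
    (hG : ‖u‖ ≤ G) (hα : 0 ≤ α) :
    fj (x + α • u) ≥ fj x + α * ‖u‖ * (Real.sin Δ * ‖gradient fj x‖ - L * α / 2 * G) ∧
    (Real.sin Δ * ‖gradient fj x‖ ≥ L * α / 2 * G → fj (x + α • u) ≥ fj x) := by
  have hdescent := le_image_add_of_norm_gradient_sub_le hdiff (fun y => hL y x) (α • u)
  have hinner : sin Δ * (‖gradient fj x‖ * ‖u‖) ≤ ⟪gradient fj x, u⟫ := by
    simpa only [cos_pi_div_two_sub] using
      cos_mul_norm_mul_norm_le_inner_of_angle_le (by linarith [pi_pos]) hangle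
  rw [real_inner_smul_right, norm_smul, norm_of_nonneg hα] at hdescent
  have hquad : L / 2 * (α * ‖u‖) ^ 2 ≤ α * ‖u‖ * (L * α / 2 * G) := by
    have := mul_le_mul_of_nonneg_left hG (by positivity : 0 ≤ L / 2 * α ^ 2 * ‖u‖)
    linarith
  have hlower : fj x + α * ‖u‖ * (sin Δ * ‖gradient fj x‖ - L * α / 2 * G) ≤ fj (x + α • u) := by
    linarith [mul_le_mul_of_nonneg_left hinner hα]
  refine ⟨hlower, fun hstep => ?_⟩
  have : 0 ≤ α * ‖u‖ * (sin Δ * ‖gradient fj x‖ - L * α / 2 * G) :=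
    mul_nonneg (by positivity) (by linarith)
  linarith

/-- A step along a direction within the hypercone of `∇f_j(x)`, with norm bounded by `G`,
does not decrease `f_j` when `sin Δ ‖∇f_j(x)‖ ≥ (Lα/2) G`. -/
theorem satisfied_objective_nondecrease {n : ℕ} (fj : EuclideanSpace ℝ (Fin n) → ℝ)
    (L Δ α G : ℝ) (x u : EuclideanSpace ℝ (Fin n))
    (hdiff : Differentiable ℝ fj)
    (hconc : ConcaveOn ℝ Set.univ fj)
    (hL : ∀ y z : EuclideanSpace ℝ (Fin n), ‖gradient fj y - gradient fj z‖ ≤ L * ‖y - z‖)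
    (hLpos : 0 < L)
    (hΔ0 : 0 < Δ) (hΔ1 : Δ ≤ π / 2)
    (hangle : angle (gradient fj x) u ≤ π / 2 - Δ)
    (hG : ‖u‖ ≤ G) (hα : 0 ≤ α) :
    fj (x + α • u) ≥ fj x + α * ‖u‖ * (Real.sin Δ * ‖gradient fj x‖ - L * α / 2 * G) ∧
    (Real.sin Δ * ‖gradient fj x‖ ≥ L * α / 2 * G → fj (x + α • u) ≥ fj x) :=
  satisfied_objective_nondecrease_general fj L Δ α G x u hdiff hL hLpos hΔ0 hangle hG hα
end

section
/- In a deterministic shortest-path setting with discounted reward R > 0 at the goal, the constraints δ₁ < R(1 − γ) and δ₁ ≥ Rγ(1 − γ²) are simultaneously satisfiable only if γ² + γ − 1 < 0, i.e., only if γ < (√5 − 1)/2 ≈ 0.618. -/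
open Real

/-- The two TLQ absolute-slacking constraints `δ₁ < R(1 − γ)` and `δ₁ ≥ Rγ(1 − γ²)`
are simultaneously satisfiable only if `γ² + γ − 1 < 0`, i.e. `γ < (√5 − 1)/2`. -/
theorem tlq_slack_gamma_bound (R γ δ₁ : ℝ)
    (hR : 0 < R) (hγ0 : 0 < γ) (hγ1 : γ < 1) (hδ : 0 ≤ δ₁)
    (h1 : δ₁ < R * (1 - γ)) (h2 : δ₁ ≥ R * γ * (1 - γ ^ 2)) :
    γ ^ 2 + γ - 1 < 0 ∧ γ < (Real.sqrt 5 - 1) / 2 := by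
  have hkey : R * γ * (1 - γ ^ 2) < R * (1 - γ) := lt_of_le_of_lt h2 h1
  have hquad : γ ^ 2 + γ - 1 < 0 := by
    have h1γ : 0 < 1 - γ := by linarith
    nlinarith [mul_pos hR h1γ]
  refine ⟨hquad, ?_⟩
  have h5 : Real.sqrt 5 ^ 2 = 5 := Real.sq_sqrt (by norm_num)
  nlinarith [Real.sqrt_nonneg 5, sq_nonneg (2*γ + 1 - Real.sqrt 5)]
end

section
/- Suppose f₁, …, f_k are differentiable at x and each μ-strongly concave, and x is Δ-Pareto-stationary (no unit direction u with angle(u, ∇f_j(x)) ≤ π/2 − Δ for all j). Then any step x⁺ with f_j(x⁺) ≥ f_j(x) for all j satisfies ‖x⁺ − x‖ ≤ (2 sin Δ / μ) · max_j ‖∇f_j(x)‖. -/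
open Real RealInnerProductSpace InnerProductGeometry

/-- At a `Δ`-Pareto-stationary point of `μ`-strongly concave objectives, any step that
does not decrease any objective has norm at most `(2 sin Δ / μ) max_j ‖∇f_j(x)‖`. -/
theorem delta_pareto_stationary_step_bound {n k : ℕ} (hk : 0 < k)
    (f : Fin k → EuclideanSpace ℝ (Fin n) → ℝ) (μ Δ : ℝ)
    (x : EuclideanSpace ℝ (Fin n))
    (hμ : 0 < μ) (hΔ0 : 0 < Δ) (hΔ1 : Δ ≤ π / 2)
    (hdiff : ∀ j, Differentiable ℝ (f j))
    (hstrong : ∀ j, ∀ y z : EuclideanSpace ℝ (Fin n),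
      f j z ≤ f j y + ⟪gradient (f j) y, z - y⟫ - μ / 2 * ‖z - y‖ ^ 2)
    (hstat : ¬ ∃ u : EuclideanSpace ℝ (Fin n), ‖u‖ = 1 ∧
      ∀ j, angle u (gradient (f j) x) ≤ π / 2 - Δ) :
    ∀ xplus : EuclideanSpace ℝ (Fin n), (∀ j, f j xplus ≥ f j x) →
      ‖xplus - x‖ ≤ (2 * Real.sin Δ / μ) * ⨆ j, ‖gradient (f j) x‖ := by
  intro xplus hge
  haveI : Nonempty (Fin k) := ⟨⟨0, hk⟩⟩
  have hsupnn : 0 ≤ ⨆ j, ‖gradient (f j) x‖ :=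
    Real.iSup_nonneg fun j => norm_nonneg _
  have hsin : 0 < Real.sin Δ :=
    Real.sin_pos_of_pos_of_lt_pi hΔ0 (lt_of_le_of_lt hΔ1 (by linarith [Real.pi_pos]))
  by_cases hd : xplus - x = 0
  · rw [hd, norm_zero]
    positivity
  set d := xplus - x with hdef
  have hdn : 0 < ‖d‖ := norm_pos_iff.mpr hd
  -- From strong concavity and non-decrease: ⟪g_j, d⟫ ≥ μ/2 ‖d‖²
  have hinner : ∀ j, μ / 2 * ‖d‖ ^ 2 ≤ ⟪gradient (f j) x, d⟫ := by
    intro j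
    have := hstrong j x xplus
    have h2 := hge j
    simp only [← hdef] at this
    linarith
  -- stationarity: some j has large angle with u = d/‖d‖
  set u : EuclideanSpace ℝ (Fin n) := (‖d‖)⁻¹ • d with hu
  have hun : ‖u‖ = 1 := by
    rw [hu, norm_smul, norm_inv, norm_norm, inv_mul_cancel₀ (ne_of_gt hdn)]
  have : ¬ ∀ j, angle u (gradient (f j) x) ≤ π / 2 - Δ := fun h => hstat ⟨u, hun, h⟩
  push_neg at this
  obtain ⟨j, hj⟩ := this
  have hang : angle d (gradient (f j) x) = angle u (gradient (f j) x) := by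
    rw [hu, angle_smul_left_of_pos _ _ (inv_pos.mpr hdn)]
  -- cos bound
  have hcos : Real.cos (angle d (gradient (f j) x)) ≤ Real.sin Δ := by
    rw [hang]
    calc Real.cos (angle u (gradient (f j) x))
        ≤ Real.cos (π / 2 - Δ) := by
          apply Real.cos_le_cos_of_nonneg_of_le_pi (by linarith) (angle_le_pi _ _) hj.le
      _ = Real.sin Δ := Real.cos_pi_div_two_sub Δ
  have hip : ⟪d, gradient (f j) x⟫ ≤ Real.sin Δ * (‖d‖ * ‖gradient (f j) x‖) := by
    rw [← cos_angle_mul_norm_mul_norm]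
    have := mul_le_mul_of_nonneg_right hcos
      (mul_nonneg (norm_nonneg d) (norm_nonneg (gradient (f j) x)))
    linarith
  have key : μ / 2 * ‖d‖ ^ 2 ≤ Real.sin Δ * (‖d‖ * ‖gradient (f j) x‖) := by
    have := hinner j
    rw [real_inner_comm] at hip
    linarith
  have hnd : ‖d‖ ≤ 2 * Real.sin Δ / μ * ‖gradient (f j) x‖ := by
    rw [div_mul_eq_mul_div, le_div_iff₀ hμ]
    nlinarith [sq_nonneg ‖d‖]
  calc ‖d‖ ≤ 2 * Real.sin Δ / μ * ‖gradient (f j) x‖ := hnd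
    _ ≤ 2 * Real.sin Δ / μ * ⨆ j, ‖gradient (f j) x‖ := by
        exact mul_le_mul_of_nonneg_left
          (le_ciSup (f := fun j => ‖gradient (f j) x‖)
            (Set.Finite.bddAbove (Set.finite_range _)) j) (by positivity)
end
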